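/- For all trace-free A, P, Q ∈ SL(2,ℂ): tr(A·(PQP⁻¹)) = −tr(AP)·tr(PQ) − tr(AQ). Equivalently, setting x(M,N) := −tr(MN), one has x(A, PQP⁻¹) = x(P,Q)·x(A,P) − x(A,Q), the fundamental relation (F2). -/

import Mathlib

open Matrix

/-- `SL(2,ℂ)`. -/
abbrev SL2C := Matrix.SpecialLinearGroup (Fin 2) ℂ

/-- The trace of an element of `SL(2,ℂ)`. -/
noncomputable def trSL2 (A : SL2C) : ℂ := Matrix.trace (A : Matrix (Fin 2) (Fin 2) ℂ)

/-!
For trace-free `P` of determinant one, Cayley–Hamilton gives `P⁻¹ = adj P = -P`, and its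
polarized form gives `PQ + QP = tr(PQ)` when `Q` is trace-free as well. Hence
`PQP⁻¹ = tr(PQ) P⁻¹ - Q = -tr(PQ) P - Q`; multiply by `A` and take traces.
-/

namespace Matrix

variable {R : Type*} [CommRing R]

theorem adjugate_fin_two_eq_trace_smul_one_sub (M : Matrix (Fin 2) (Fin 2) R) :
    adjugate M = M.trace • 1 - M := by
  ext i j
  fin_cases i <;> fin_cases j <;> simp [adjugate_fin_two, trace_fin_two]

theorem mul_add_mul_fin_two (X Y : Matrix (Fin 2) (Fin 2) R) :
    X * Y + Y * X = X.trace • Y + Y.trace • X + (trace (X * Y) - X.trace * Y.trace) • 1 := by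
  ext i j
  fin_cases i <;> fin_cases j <;>
    simp [Matrix.mul_apply, Fin.sum_univ_two, trace_fin_two] <;> ring

namespace SpecialLinearGroup

open scoped MatrixGroups

theorem coe_inv_of_trace_eq_zero (P : SL(2, R)) (hP : trace (P : Matrix (Fin 2) (Fin 2) R) = 0) :
    ((P⁻¹ : SL(2, R)) : Matrix (Fin 2) (Fin 2) R) = -P := by
  rw [coe_inv, adjugate_fin_two_eq_trace_smul_one_sub, hP, zero_smul, zero_sub]

theorem coe_conj_of_trace_eq_zero (P Q : SL(2, R))
    (hP : trace (P : Matrix (Fin 2) (Fin 2) R) = 0)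
    (hQ : trace (Q : Matrix (Fin 2) (Fin 2) R) = 0) :
    ((P * Q * P⁻¹ : SL(2, R)) : Matrix (Fin 2) (Fin 2) R) =
      -(trace (P * Q : Matrix (Fin 2) (Fin 2) R) • (P : Matrix (Fin 2) (Fin 2) R)) - Q := by
  have hPQ : (P * Q : Matrix (Fin 2) (Fin 2) R) =
      trace (P * Q : Matrix (Fin 2) (Fin 2) R) • 1 - Q * P := by
    rw [eq_sub_iff_add_eq, mul_add_mul_fin_two, hP, hQ]
    simp
  have hPP : (P * P⁻¹ : Matrix (Fin 2) (Fin 2) R) = 1 := by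
    rw [← coe_mul, mul_inv_cancel, coe_one]
  conv_lhs => rw [coe_mul, coe_mul, hPQ, sub_mul, Matrix.mul_assoc, hPP,
    coe_inv_of_trace_eq_zero P hP]
  simp

end SpecialLinearGroup

end Matrix

theorem stmt5 (A P Q : SL2C)
    (hP : trSL2 P = 0) (hQ : trSL2 Q = 0) :
    trSL2 (A * (P * Q * P⁻¹)) = -(trSL2 (A * P) * trSL2 (P * Q)) - trSL2 (A * Q) := by
  have hconj := Matrix.SpecialLinearGroup.coe_conj_of_trace_eq_zero P Q hP hQ
  simp only [trSL2, Matrix.SpecialLinearGroup.coe_mul A, hconj, Matrix.SpecialLinearGroup.coe_mul,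
    Matrix.mul_sub, Matrix.mul_neg, Matrix.mul_smul, trace_sub, trace_neg, trace_smul, smul_eq_mul]
  ring
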